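/- arXiv:2604.16777 — 9 statements merged into one kernel-verified Lean document; each statement's English description precedes it below -/
import Mathlib

section
/- Let A be a real symmetric positive definite n×n matrix, let τ > 0, and let u, N be vectors in ℝⁿ. Then exp(τ·A) - 1 is an invertible matrix, and the vector u' := exp(-τ·A) · u + A⁻¹ · (1 - exp(-τ·A)) · N satisfies the quasi-implicit backward-Euler identity (exp(τ·A) - 1)⁻¹ · A · (u' - u) + A · u' = N. -/
/-!
Symmetric `A` and the matrices `exp (±τA)` all commute, and multiplying the ETD1 step by
`exp (τA)` gives `exp (τA) u' = u + A⁻¹ (exp (τA) - 1) N`; the backward-Euler identity is this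
relation multiplied by `(exp (τA) - 1)⁻¹ A`. Invertibility of `exp (τA) - 1` is spectral: the
eigenvalues of `τA` are real and nonzero, and `Real.exp x = 1` only at `x = 0`.
-/

open Matrix

theorem IsSelfAdjoint.isUnit_exp_sub_one {A : Type*} [NormedRing A] [StarRing A]
    [NormedAlgebra ℝ A] [ContinuousFunctionalCalculus ℝ A IsSelfAdjoint] {a : A}
    (ha : IsSelfAdjoint a) (hu : IsUnit a) : IsUnit (NormedSpace.exp a - 1) := by
  have hcfc : NormedSpace.exp a - 1 = cfc (fun x : ℝ => Real.exp x - 1) a := by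
    rw [cfc_sub .., cfc_const_one ℝ a, CFC.real_exp_eq_normedSpace_exp ha]
  rw [hcfc, isUnit_cfc_iff _ a]
  intro x hx
  rw [sub_ne_zero, Ne, Real.exp_eq_one_iff]
  rintro rfl
  exact spectrum.zero_notMem ℝ hu hx

open scoped Matrix.Norms.L2Operator in
theorem Matrix.IsHermitian.isUnit_exp_sub_one {n : Type*} [Fintype n] [DecidableEq n]
    {A : Matrix n n ℝ} (hA : A.IsHermitian) (hu : IsUnit A) : IsUnit (NormedSpace.exp A - 1) :=
  hA.isSelfAdjoint.isUnit_exp_sub_one hu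

namespace Matrix

variable {ι K : Type*} [Fintype ι] [DecidableEq ι] [CommRing K] {A E F : Matrix ι ι K}

theorem commute_nonsing_inv_left (h : Commute A F) : Commute A⁻¹ F := by
  by_cases hA : IsUnit A
  · obtain ⟨U, rfl⟩ := hA
    rw [← coe_units_inv]
    exact h.units_inv_left
  · rw [nonsing_inv_apply_not_isUnit A ((isUnit_iff_isUnit_det A).not.mp hA)]
    exact Commute.zero_left F

theorem mulVec_etd1_step (hEF : E * F = 1) (hAF : Commute A F) (u N : ι → K) :
    F *ᵥ (E *ᵥ u + (A⁻¹ * (1 - E)) *ᵥ N) = u + (A⁻¹ * (F - 1)) *ᵥ N := by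
  have hFE : F * E = 1 := mul_eq_one_comm.mp hEF
  rw [mulVec_add, mulVec_mulVec, mulVec_mulVec, hFE, one_mulVec, ← mul_assoc,
    (commute_nonsing_inv_left hAF).eq.symm, mul_assoc, mul_sub, hFE, mul_one]

theorem backwardEuler_form_of_mulVec_eq (hAF : Commute A F) (hA : IsUnit A)
    (hB : IsUnit (F - 1)) {u u' N : ι → K} (hu' : F *ᵥ u' = u + (A⁻¹ * (F - 1)) *ᵥ N) :
    ((F - 1)⁻¹ * A) *ᵥ (u' - u) + A *ᵥ u' = N := by
  have hBA : (F - 1) * A = A * (F - 1) := by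
    rw [sub_mul, mul_sub, hAF.eq, one_mul, mul_one]
  have hBinv : (F - 1)⁻¹ * (F - 1) = 1 := nonsing_inv_mul _ ((isUnit_iff_isUnit_det _).mp hB)
  have hAinv : A * A⁻¹ = 1 := mul_nonsing_inv _ ((isUnit_iff_isUnit_det _).mp hA)
  calc ((F - 1)⁻¹ * A) *ᵥ (u' - u) + A *ᵥ u'
      = ((F - 1)⁻¹ * A) *ᵥ (u' - u) + ((F - 1)⁻¹ * A) *ᵥ ((F - 1) *ᵥ u') := by
        rw [mulVec_mulVec, mul_assoc, ← hBA, ← mul_assoc, hBinv, one_mul]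
    _ = ((F - 1)⁻¹ * A) *ᵥ (F *ᵥ u' - u) := by
        rw [← mulVec_add, sub_mulVec, one_mulVec]
        abel_nf
    _ = N := by
        rw [hu', add_sub_cancel_left, mulVec_mulVec, mul_assoc, ← mul_assoc A, hAinv, one_mul,
          hBinv, one_mulVec]

end Matrix

theorem stmt2_general {n : ℕ} (A : Matrix (Fin n) (Fin n) ℝ) (hA : A.PosDef)
    (τ : ℝ) (hτ : 0 < τ) (u N : Fin n → ℝ) :
    IsUnit (NormedSpace.exp (τ • A) - 1) ∧
    ((NormedSpace.exp (τ • A) - 1)⁻¹ * A).mulVec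
        ((NormedSpace.exp (-(τ • A))).mulVec u
          + (A⁻¹ * (1 - NormedSpace.exp (-(τ • A)))).mulVec N - u)
      + A.mulVec ((NormedSpace.exp (-(τ • A))).mulVec u
          + (A⁻¹ * (1 - NormedSpace.exp (-(τ • A)))).mulVec N)
      = N := by
  have hexp : NormedSpace.exp (-(τ • A)) * NormedSpace.exp (τ • A) = 1 := by
    rw [← exp_add_of_commute _ _ ((Commute.refl (τ • A)).neg_left), neg_add_cancel, NormedSpace.exp_zero]
  have hcomm : Commute A (NormedSpace.exp (τ • A)) := ((Commute.refl A).smul_right τ).exp_right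
  have hunit : IsUnit (NormedSpace.exp (τ • A) - 1) :=
    (hA.isHermitian.smul (IsSelfAdjoint.all τ)).isUnit_exp_sub_one
      (hA.isUnit.smul (Units.mk0 τ hτ.ne'))
  exact ⟨hunit, backwardEuler_form_of_mulVec_eq hcomm hA.isUnit hunit
    (mulVec_etd1_step hexp hcomm u N)⟩

/-- One step of the ETD1 scheme `u' = e^{-τA} u + τ φ₁(-τA) N` with
`φ₁ z = (e^z - 1)/z`, written as `u' = e^{-τA} u + A⁻¹ (1 - e^{-τA}) N`, satisfies the
quasi-implicit backward-Euler identity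
`(e^{τA} - 1)⁻¹ A (u' - u) + A u' = N`, where `e^{τA} - 1` is invertible. -/
theorem stmt2 {n : ℕ} (A : Matrix (Fin n) (Fin n) ℝ) (hA : A.PosDef) (hAsymm : A.IsSymm)
    (τ : ℝ) (hτ : 0 < τ) (u N : Fin n → ℝ) :
    IsUnit (NormedSpace.exp (τ • A) - 1) ∧
    ((NormedSpace.exp (τ • A) - 1)⁻¹ * A).mulVec
        ((NormedSpace.exp (-(τ • A))).mulVec u
          + (A⁻¹ * (1 - NormedSpace.exp (-(τ • A)))).mulVec N - u)
      + A.mulVec ((NormedSpace.exp (-(τ • A))).mulVec u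
          + (A⁻¹ * (1 - NormedSpace.exp (-(τ • A)))).mulVec N)
      = N :=
  stmt2_general A hA τ hτ u N
end

section
/- Let A be a real symmetric positive definite n×n matrix and τ > 0. Then exp(τ·A) - 1 is invertible, and the matrix P := τ · A · (exp(τ·A) - 1)⁻¹ is symmetric and positive semidefinite, the matrix 1 - P is positive semidefinite (i.e., P ⪯ 1 in the Loewner order), and the matrix P + (τ/2)·A - 1 is positive semidefinite (i.e., P + (τ/2)·A ⪰ 1 in the Loewner order). -/
/-!
By the continuous functional calculus, `P = Q(τA)` with `Q z = z / (e^z - 1)`, so the three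
Loewner bounds reduce to the scalar bounds `0 ≤ Q z ≤ 1` and `1 ≤ Q z + z / 2` on the spectrum
of `τA`, which lies in `(0, ∞)`. The last bound is `tanh (z / 2) ≤ z / 2` in disguise.
-/

open Matrix

namespace Real

theorem two_mul_exp_sub_one_le {x : ℝ} (hx : 0 ≤ x) : 2 * (exp x - 1) ≤ x * (exp x + 1) := by
  let g : ℝ → ℝ := fun t => t * (exp t + 1) - 2 * (exp t - 1)
  have hg : ∀ t, HasDerivAt g (1 - exp t * (1 - t)) t := fun t =>
    (((hasDerivAt_id' t).mul ((hasDerivAt_exp t).add_const 1)).sub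
      (((hasDerivAt_exp t).sub_const 1).const_mul 2)).congr_deriv (by ring)
  have hg_mono : Monotone g := by
    refine monotone_of_deriv_nonneg (fun t => (hg t).differentiableAt) fun t => ?_
    rw [(hg t).deriv, sub_nonneg]
    calc exp t * (1 - t) ≤ exp t * exp (-t) := by gcongr; linarith [add_one_le_exp (-t)]
      _ = 1 := by rw [← exp_add, add_neg_cancel, exp_zero]
  have := hg_mono hx
  simp only [g, zero_mul, exp_zero, sub_self, mul_zero] at this
  linarith

theorem div_exp_sub_one_nonneg (z : ℝ) : 0 ≤ z / (exp z - 1) := by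
  rcases le_total 0 z with hz | hz
  · exact div_nonneg hz (sub_nonneg.mpr (one_le_exp hz))
  · exact div_nonneg_of_nonpos hz (sub_nonpos.mpr (exp_le_one_iff.mpr hz))

theorem div_exp_sub_one_le_one {z : ℝ} (hz : 0 ≤ z) : z / (exp z - 1) ≤ 1 :=
  div_le_one_of_le₀ (by linarith [add_one_le_exp z]) (sub_nonneg.mpr (one_le_exp hz))

theorem one_le_div_exp_sub_one_add_half {z : ℝ} (hz : 0 < z) : 1 ≤ z / (exp z - 1) + z / 2 := by
  have hd : 0 < exp z - 1 := sub_pos.mpr (one_lt_exp_iff.mpr hz)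
  rw [div_add' _ _ _ hd.ne', le_div_iff₀ hd]
  linarith [two_mul_exp_sub_one_le hz.le]

end Real

theorem exp_mul_sub_one_ne_zero_of_mem_spectrum {A : Type*} [Ring A] [Algebra ℝ A] {a : A}
    (hu : IsUnit a) {τ x : ℝ} (hτ : τ ≠ 0) (hx : x ∈ spectrum ℝ a) : Real.exp (τ * x) - 1 ≠ 0 := by
  have : x ≠ 0 := by rintro rfl; exact spectrum.zero_notMem ℝ hu hx
  simp [sub_eq_zero, hτ, this]

section Order

variable {A : Type*} [TopologicalSpace A] [Ring A] [StarRing A] [Algebra ℝ A]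
  [ContinuousFunctionalCalculus ℝ A IsSelfAdjoint] [PartialOrder A] [StarOrderedRing A]

theorem cfc_div_exp_sub_one_nonneg (a : A) (τ : ℝ) :
    0 ≤ cfc (fun x => τ * x / (Real.exp (τ * x) - 1)) a :=
  cfc_nonneg fun x _ => Real.div_exp_sub_one_nonneg (τ * x)

variable [NonnegSpectrumClass ℝ A]

theorem cfc_div_exp_sub_one_le_one {a : A} (ha : 0 ≤ a) {τ : ℝ} (hτ : 0 ≤ τ) :
    cfc (fun x => τ * x / (Real.exp (τ * x) - 1)) a ≤ 1 :=
  cfc_le_one _ a fun _ hx =>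
    Real.div_exp_sub_one_le_one (mul_nonneg hτ (spectrum_nonneg_of_nonneg ha hx))

theorem one_le_cfc_div_exp_sub_one_add_half_smul {a : A} (ha : IsStrictlyPositive a) {τ : ℝ}
    (hτ : 0 < τ) : 1 ≤ cfc (fun x => τ * x / (Real.exp (τ * x) - 1)) a + (τ / 2) • a := by
  have hcont : ContinuousOn (fun x => τ * x / (Real.exp (τ * x) - 1)) (spectrum ℝ a) :=
    ContinuousOn.div (by fun_prop) (by fun_prop) fun _ hx =>
      exp_mul_sub_one_ne_zero_of_mem_spectrum ha.isUnit hτ.ne' hx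
  rw [← cfc_const_mul_id (τ / 2) a, ← cfc_add (a := a) (g := fun x => τ / 2 * x) (hf := hcont)]
  refine one_le_cfc _ a fun x hx => ?_
  have := Real.one_le_div_exp_sub_one_add_half (mul_pos hτ (ha.spectrum_pos hx))
  linarith

end Order

section Exp

variable {A : Type*} [NormedRing A] [StarRing A] [NormedAlgebra ℝ A] [StarModule ℝ A]
  [ContinuousFunctionalCalculus ℝ A IsSelfAdjoint]

theorem exp_smul_sub_one_eq_cfc {a : A} (ha : IsSelfAdjoint a) (τ : ℝ) :
    NormedSpace.exp (τ • a) - 1 = cfc (fun x => Real.exp (τ * x) - 1) a := by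
  rw [cfc_sub _ _, cfc_comp_const_mul τ Real.exp a,
    CFC.real_exp_eq_normedSpace_exp ((IsSelfAdjoint.all τ).smul ha), cfc_const_one ℝ a]

theorem isUnit_exp_smul_sub_one {a : A} (ha : IsSelfAdjoint a) (hu : IsUnit a) {τ : ℝ}
    (hτ : τ ≠ 0) : IsUnit (NormedSpace.exp (τ • a) - 1) := by
  rw [exp_smul_sub_one_eq_cfc ha]
  exact (isUnit_cfc_iff _ a).mpr fun _ hx => exp_mul_sub_one_ne_zero_of_mem_spectrum hu hτ hx

theorem cfc_div_exp_sub_one {a : A} (ha : IsSelfAdjoint a) (hu : IsUnit a) {τ : ℝ} (hτ : τ ≠ 0) :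
    cfc (fun x => τ * x / (Real.exp (τ * x) - 1)) a =
      τ • (a * Ring.inverse (NormedSpace.exp (τ • a) - 1)) := by
  rw [cfc_map_div _ _ a fun _ hx => exp_mul_sub_one_ne_zero_of_mem_spectrum hu hτ hx,
    cfc_const_mul_id τ a, exp_smul_sub_one_eq_cfc ha, smul_mul_assoc]

end Exp

theorem stmt3_general {n : ℕ} (A : Matrix (Fin n) (Fin n) ℝ) (hA : A.PosDef)
    (τ : ℝ) (hτ : 0 < τ) :
    IsUnit (NormedSpace.exp (τ • A) - 1) ∧
    (τ • (A * (NormedSpace.exp (τ • A) - 1)⁻¹)).IsSymm ∧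
    (τ • (A * (NormedSpace.exp (τ • A) - 1)⁻¹)).PosSemidef ∧
    ((1 : Matrix (Fin n) (Fin n) ℝ)
      - τ • (A * (NormedSpace.exp (τ • A) - 1)⁻¹)).PosSemidef ∧
    (τ • (A * (NormedSpace.exp (τ • A) - 1)⁻¹) + (τ / 2) • A
      - (1 : Matrix (Fin n) (Fin n) ℝ)).PosSemidef := by
  -- `NormedSpace.exp` depends only on the topology, which the L2 operator norm induces.
  open scoped Matrix.Norms.L2Operator MatrixOrder in
  have ha : IsStrictlyPositive A := hA.isStrictlyPositive
  have hP : τ • (A * (NormedSpace.exp (τ • A) - 1)⁻¹) =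
      cfc (fun x => τ * x / (Real.exp (τ * x) - 1)) A := by
    rw [nonsing_inv_eq_ringInverse, cfc_div_exp_sub_one ha.isSelfAdjoint ha.isUnit hτ.ne']
  have hP_psd : (τ • (A * (NormedSpace.exp (τ • A) - 1)⁻¹)).PosSemidef :=
    hP ▸ nonneg_iff_posSemidef.mp (cfc_div_exp_sub_one_nonneg A τ)
  refine ⟨isUnit_exp_smul_sub_one ha.isSelfAdjoint ha.isUnit hτ.ne',
    isHermitian_iff_isSymm.mp hP_psd.isHermitian, hP_psd, ?_, ?_⟩
  · rw [hP, ← le_iff]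
    exact cfc_div_exp_sub_one_le_one ha.nonneg hτ.le
  · rw [hP, ← le_iff]
    exact one_le_cfc_div_exp_sub_one_add_half_smul ha hτ

/-- For a real symmetric positive definite matrix `A` and `τ > 0`, the matrix
`e^{τA} - 1` is invertible, and `P = τ • (A * (e^{τA} - 1)⁻¹)` is symmetric positive
semidefinite with `P ⪯ 1` and `1 ⪯ P + (τ/2) • A` in the Loewner order.  This is the
matrix form of Lemma 2 of the paper concerning `Q(τA)` with `Q z = z / (e^z - 1)`. -/
theorem stmt3 {n : ℕ} (A : Matrix (Fin n) (Fin n) ℝ) (hA : A.PosDef) (hAsymm : A.IsSymm)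
    (τ : ℝ) (hτ : 0 < τ) :
    IsUnit (NormedSpace.exp (τ • A) - 1) ∧
    (τ • (A * (NormedSpace.exp (τ • A) - 1)⁻¹)).IsSymm ∧
    (τ • (A * (NormedSpace.exp (τ • A) - 1)⁻¹)).PosSemidef ∧
    ((1 : Matrix (Fin n) (Fin n) ℝ)
      - τ • (A * (NormedSpace.exp (τ • A) - 1)⁻¹)).PosSemidef ∧
    (τ • (A * (NormedSpace.exp (τ • A) - 1)⁻¹) + (τ / 2) • A
      - (1 : Matrix (Fin n) (Fin n) ℝ)).PosSemidef :=
  stmt3_general A hA τ hτ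
end

section
/- Let A be a unital C*-algebra and let a ∈ A be a selfadjoint element whose spectrum is contained in [0, ∞). Then for all real numbers t > 0 and β > 0, the element cfc(f, a) obtained by applying the continuous functional calculus with f(λ) = λ^β · e^{-tλ} to a satisfies ‖cfc(f, a)‖ ≤ (β/e)^β · t^{-β}. -/
lemma key_ineq (β : ℝ) (hβ : 0 < β) {y : ℝ} (hy : 0 ≤ y) :
    y ^ β * Real.exp (-y) ≤ (β / Real.exp 1) ^ β := by
  rcases eq_or_lt_of_le hy with h | h
  · rw [← h, Real.zero_rpow hβ.ne', zero_mul]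
    positivity
  · have hlog : Real.log (y / β) ≤ y / β - 1 :=
      Real.log_le_sub_one_of_pos (by positivity)
    rw [Real.log_div h.ne' hβ.ne'] at hlog
    have h2 : β * (y / β) = y := mul_div_cancel₀ y hβ.ne'
    have h1 : β * Real.log y - y ≤ β * Real.log β - β := by
      nlinarith [mul_le_mul_of_nonneg_left hlog hβ.le]
    calc y ^ β * Real.exp (-y) = Real.exp (β * Real.log y - y) := by
          rw [Real.exp_sub, Real.rpow_def_of_pos h, mul_comm β, Real.exp_neg]
          ring
      _ ≤ Real.exp (β * Real.log β - β) := Real.exp_le_exp.mpr h1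
      _ = (β / Real.exp 1) ^ β := by
          rw [Real.div_rpow hβ.le (Real.exp_pos 1).le,
            Real.rpow_def_of_pos hβ, Real.exp_one_rpow,
            Real.exp_sub, mul_comm β]

/-- Smoothing estimate of Lemma 7 of the paper, via continuous functional calculus:
if `a` is a selfadjoint element of a unital C*-algebra with spectrum contained in
`[0, ∞)`, then for `t > 0` and `β > 0`,
`‖cfc (fun λ => λ ^ β * exp (-t * λ)) a‖ ≤ (β / e) ^ β * t ^ (-β)`. -/
theorem stmt5 {A : Type*} [CStarAlgebra A] (a : A) (ha : IsSelfAdjoint a)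
    (hspec : spectrum ℝ a ⊆ Set.Ici (0 : ℝ)) (t β : ℝ) (ht : 0 < t) (hβ : 0 < β) :
    ‖cfc (fun l : ℝ => l ^ β * Real.exp (-t * l)) a‖
      ≤ (β / Real.exp 1) ^ β * t ^ (-β) := by
  apply norm_cfc_le (by positivity)
  intro x hx
  have hx0 : 0 ≤ x := hspec hx
  have key := key_ineq β hβ (y := t * x) (by positivity)
  rw [Real.mul_rpow ht.le hx0] at key
  rw [Real.norm_eq_abs, abs_of_nonneg (by positivity), neg_mul,
    Real.rpow_neg ht.le, ← div_eq_mul_inv, le_div_iff₀ (Real.rpow_pos_of_pos ht β)]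
  nlinarith [key]
end

section
/- Let Q and T be real 3×3 matrices with Q symmetric and trace(Q) = 0, and let Ã, A, B, C, κ, S be real numbers with C ≥ 0, A ≤ Ã, κ ≥ Ã + C·‖Q‖_F², and ‖T‖_F ≤ S. Then ‖(κ - Ã - C·‖Q‖_F²)·Q + B·(Q² - (trace(Q²)/3)·1) - T‖_F ≤ κ·‖Q‖_F + f(‖Q‖_F), where f(ξ) := -A·ξ + (|B|/√6)·ξ² - C·ξ³ + S. -/
open Matrix

/-- The Frobenius norm of a real `3 × 3` matrix. -/
noncomputable def frobNorm (X : Matrix (Fin 3) (Fin 3) ℝ) : ℝ :=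
  Real.sqrt (∑ i, ∑ j, X i j ^ 2)

attribute [local instance] Matrix.frobeniusNormedAddCommGroup Matrix.frobeniusNormedSpace

lemma frobNorm_eq_norm (X : Matrix (Fin 3) (Fin 3) ℝ) : frobNorm X = ‖X‖ := by
  rw [frobNorm, Matrix.frobenius_norm_def, Real.sqrt_eq_rpow]
  congr 1
  refine Finset.sum_congr rfl fun i _ => Finset.sum_congr rfl fun j _ => ?_
  rw [Real.norm_eq_abs, Real.rpow_two, sq_abs]

lemma frobNorm_nonneg (X : Matrix (Fin 3) (Fin 3) ℝ) : 0 ≤ frobNorm X :=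
  Real.sqrt_nonneg _

lemma frobNorm_sq (X : Matrix (Fin 3) (Fin 3) ℝ) :
    frobNorm X ^ 2 = ∑ i, ∑ j, X i j ^ 2 := by
  rw [frobNorm, Real.sq_sqrt]
  positivity

lemma key_sum (Q : Matrix (Fin 3) (Fin 3) ℝ) (hQsymm : Q.IsSymm) (hQtr : Q.trace = 0) :
    (∑ i, ∑ j, (Q ^ 2 - ((Q ^ 2).trace / 3) • (1 : Matrix (Fin 3) (Fin 3) ℝ)) i j ^ 2) * 6
      = (∑ i, ∑ j, Q i j ^ 2) ^ 2 := by
  have h22 : Q 2 2 = -(Q 0 0 + Q 1 1) := by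
    have := hQtr
    simp [Matrix.trace, Fin.sum_univ_three, Matrix.diag] at this
    linarith
  have s10 : Q 1 0 = Q 0 1 := hQsymm.apply 0 1
  have s20 : Q 2 0 = Q 0 2 := hQsymm.apply 0 2
  have s21 : Q 2 1 = Q 1 2 := hQsymm.apply 1 2
  simp [pow_two, Matrix.mul_apply, Matrix.sub_apply, Matrix.smul_apply, Matrix.one_apply,
    Matrix.trace, Matrix.diag, Fin.sum_univ_three, s10, s20, s21, h22]
  ring

/-- Lemma 9 of the paper (case `d = 3`): the pointwise Frobenius-norm estimate for the
stabilized nonlinear term of the smectic mLdG model, with `b₃ = |B| / √6` and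
`f ξ = -A ξ + (|B|/√6) ξ² - C ξ³ + S`. -/
theorem stmt8 (Q T : Matrix (Fin 3) (Fin 3) ℝ) (hQsymm : Q.IsSymm) (hQtr : Q.trace = 0)
    (Atil A B C κ S : ℝ) (hC : 0 ≤ C) (hA : A ≤ Atil)
    (hκ : Atil + C * frobNorm Q ^ 2 ≤ κ) (hT : frobNorm T ≤ S) :
    frobNorm ((κ - Atil - C * frobNorm Q ^ 2) • Q
        + B • (Q ^ 2 - ((Q ^ 2).trace / 3) • (1 : Matrix (Fin 3) (Fin 3) ℝ)) - T)
      ≤ κ * frobNorm Q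
        + (-A * frobNorm Q + (|B| / Real.sqrt 6) * frobNorm Q ^ 2
            - C * frobNorm Q ^ 3 + S) := by
  set x : ℝ := frobNorm Q with hxdef
  have hx0 : 0 ≤ x := frobNorm_nonneg Q
  set M : Matrix (Fin 3) (Fin 3) ℝ :=
    Q ^ 2 - ((Q ^ 2).trace / 3) • (1 : Matrix (Fin 3) (Fin 3) ℝ) with hMdef
  -- the key Frobenius-norm identity
  have h6 : (0 : ℝ) < Real.sqrt 6 := Real.sqrt_pos.mpr (by norm_num)
  have hMnorm : frobNorm M = x ^ 2 / Real.sqrt 6 := by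
    have hks := key_sum Q hQsymm hQtr
    have hsum : (∑ i, ∑ j, M i j ^ 2) = (x ^ 2) ^ 2 / 6 := by
      rw [hxdef, frobNorm_sq]
      linarith [hks]
    rw [frobNorm, hsum, Real.sqrt_div (by positivity), Real.sqrt_sq (by positivity)]
  set a : ℝ := κ - Atil - C * x ^ 2 with hadef
  have ha0 : 0 ≤ a := by simp only [hadef]; linarith
  -- triangle inequality via the Frobenius norm instance
  have htri : frobNorm (a • Q + B • M - T) ≤ a * x + |B| * (x ^ 2 / Real.sqrt 6) + frobNorm T := by
    rw [frobNorm_eq_norm]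
    calc ‖a • Q + B • M - T‖ ≤ ‖a • Q + B • M‖ + ‖T‖ := norm_sub_le _ _
      _ ≤ ‖a • Q‖ + ‖B • M‖ + ‖T‖ := by linarith [norm_add_le (a • Q) (B • M)]
      _ = |a| * ‖Q‖ + |B| * ‖M‖ + ‖T‖ := by rw [norm_smul, norm_smul, Real.norm_eq_abs, Real.norm_eq_abs]
      _ = a * x + |B| * (x ^ 2 / Real.sqrt 6) + frobNorm T := by
          rw [abs_of_nonneg ha0, ← frobNorm_eq_norm, ← frobNorm_eq_norm, ← frobNorm_eq_norm,
            hMnorm, hxdef]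
  refine htri.trans ?_
  have hax : a * x ≤ κ * x - A * x - C * x ^ 3 := by
    have : (Atil - A) * x ≥ 0 := mul_nonneg (by linarith) hx0
    have hx3 : C * x ^ 2 * x = C * x ^ 3 := by ring
    nlinarith
  have hBterm : |B| * (x ^ 2 / Real.sqrt 6) = |B| / Real.sqrt 6 * x ^ 2 := by ring
  rw [hBterm] at htri
  clear_value x a M
  linarith
end

section
/- Let M be a real n×n matrix such that M_{ij} ≥ 0 for all i ≠ j and Σ_j M_{ij} = 0 for every row i, let c ≥ 0 and t ≥ 0. Then for every vector x ∈ ℝⁿ, the vector exp(t·(M - c·1))·x satisfies the sup-norm contraction bound max_i |(exp(t·(M - c·1))·x)_i| ≤ e^{-ct} · max_i |x_i|. -/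
/-!
The matrix `A = t • (M - c • 1)` has nonnegative off-diagonal entries and every row sum equal
to `-c t`. Shifting by a large multiple of the identity makes it entrywise nonnegative, so
`exp A`, a positive multiple of the exponential of that nonnegative matrix, is entrywise
nonnegative. The constant vector is an eigenvector of `A` with eigenvalue `-c t`, hence of
`exp A` with eigenvalue `e^{-ct}`: every row of `exp A` is a nonnegative vector summing to
`e^{-ct}`, which is exactly the sup-norm bound.
-/

open Matrix NormedSpace

attribute [local instance] Matrix.linftyOpNormedRing Matrix.linftyOpNormedAlgebra

namespace Matrix

variable {ι : Type*} [Fintype ι]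

theorem norm_mulVec_le_of_nonneg_of_mulVec_one {P : Matrix ι ι ℝ} {r : ℝ}
    (hP : ∀ i j, 0 ≤ P i j) (hrow : P *ᵥ 1 = r • 1) (x : ι → ℝ) :
    ‖P *ᵥ x‖ ≤ r * ‖x‖ := by
  rcases isEmpty_or_nonempty ι with hι | hι
  · simp [Subsingleton.elim x 0]
  refine (pi_norm_le_iff_of_nonempty _).2 fun i => ?_
  have hri : ∑ j, P i j = r := by simpa [mulVec, dotProduct] using congrFun hrow i
  calc ‖(P *ᵥ x) i‖ ≤ ∑ j, ‖P i j * x j‖ := norm_sum_le _ _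
    _ ≤ ∑ j, P i j * ‖x‖ := Finset.sum_le_sum fun j _ => by
        rw [norm_mul, Real.norm_of_nonneg (hP i j)]
        exact mul_le_mul_of_nonneg_left (norm_le_pi_norm x j) (hP i j)
    _ = r * ‖x‖ := by rw [← Finset.sum_mul, hri]

variable [DecidableEq ι]

theorem exp_apply_nonneg {A : Matrix ι ι ℝ} (hA : ∀ i j, 0 ≤ A i j) (i j : ι) :
    0 ≤ exp A i j := by
  have hsum := Pi.hasSum.mp (Pi.hasSum.mp (exp_series_hasSum_exp' (𝕂 := ℝ) A) i) j
  exact hsum.nonneg fun k => mul_nonneg (by positivity) (pow_apply_nonneg hA k i j)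

theorem exp_smul_one_add (s : ℝ) (A : Matrix ι ι ℝ) :
    exp (s • (1 : Matrix ι ι ℝ) + A) = Real.exp s • exp A := by
  rw [exp_add_of_commute _ _ ((Commute.one_left A).smul_left s),
    ← Algebra.algebraMap_eq_smul_one]
  erw [← algebraMap_exp_comm]
  rw [Real.exp_eq_exp_ℝ, Algebra.smul_def]

theorem exp_apply_nonneg_of_offDiag_nonneg {A : Matrix ι ι ℝ}
    (hA : ∀ i j, i ≠ j → 0 ≤ A i j) (i j : ι) : 0 ≤ exp A i j := by
  set s := ∑ k, |A k k|
  have hshift : ∀ i j, 0 ≤ (s • (1 : Matrix ι ι ℝ) + A) i j := by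
    intro i j
    rcases eq_or_ne i j with rfl | hij
    · have : |A i i| ≤ s :=
        Finset.single_le_sum (fun k _ => abs_nonneg (A k k)) (Finset.mem_univ i)
      simp only [add_apply, smul_apply, one_apply_eq, smul_eq_mul, mul_one]
      linarith [neg_abs_le (A i i)]
    · simpa [one_apply_ne hij] using hA i j hij
  have hexp : exp A = Real.exp (-s) • exp (s • (1 : Matrix ι ι ℝ) + A) := by
    rw [exp_smul_one_add, smul_smul, ← Real.exp_add, neg_add_cancel, Real.exp_zero, one_smul]
  rw [hexp, smul_apply, smul_eq_mul]
  exact mul_nonneg (Real.exp_pos _).le (exp_apply_nonneg hshift i j)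

theorem pow_mulVec_of_mulVec_eq_smul {A : Matrix ι ι ℝ} {v : ι → ℝ} {a : ℝ}
    (h : A *ᵥ v = a • v) (k : ℕ) : (A ^ k) *ᵥ v = a ^ k • v := by
  induction k with
  | zero => simp
  | succ k ih => rw [pow_succ, ← mulVec_mulVec, h, mulVec_smul, ih, smul_smul, pow_succ']

theorem exp_mulVec_of_mulVec_eq_smul {A : Matrix ι ι ℝ} {v : ι → ℝ} {a : ℝ}
    (h : A *ᵥ v = a • v) : exp A *ᵥ v = Real.exp a • v := by
  have hA : HasSum (fun k => ((k.factorial⁻¹ : ℝ) • A ^ k) *ᵥ v) (exp A *ᵥ v) :=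
    (exp_series_hasSum_exp' (𝕂 := ℝ) A).map (mulVec.addMonoidHomLeft v)
      (continuous_id.matrix_mulVec continuous_const)
  have ha := (exp_series_hasSum_exp' (𝕂 := ℝ) a).smul_const v
  simp only [smul_mulVec, pow_mulVec_of_mulVec_eq_smul h, smul_smul] at hA
  rw [Real.exp_eq_exp_ℝ]
  exact hA.unique (by simpa only [smul_smul, smul_eq_mul] using ha)

end Matrix

theorem stmt11_general {n : ℕ} (M : Matrix (Fin n) (Fin n) ℝ)
    (hoff : ∀ i j, i ≠ j → 0 ≤ M i j) (hrow : ∀ i, ∑ j, M i j = 0)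
    (c t : ℝ) (ht : 0 ≤ t) (x : Fin n → ℝ) :
    ‖(NormedSpace.exp
        (t • (M - c • (1 : Matrix (Fin n) (Fin n) ℝ)))).mulVec x‖
      ≤ Real.exp (-c * t) * ‖x‖ := by
  set A := t • (M - c • (1 : Matrix (Fin n) (Fin n) ℝ))
  have hA_offDiag : ∀ i j, i ≠ j → 0 ≤ A i j := fun i j hij => by
    simpa [A, one_apply_ne hij] using mul_nonneg ht (hoff i j hij)
  have hM : M *ᵥ 1 = 0 := funext fun i => by simpa [mulVec, dotProduct] using hrow i
  have hA_row : A *ᵥ 1 = (-c * t) • 1 := by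
    rw [smul_mulVec, sub_mulVec, hM, smul_mulVec, one_mulVec]
    module
  exact norm_mulVec_le_of_nonneg_of_mulVec_one (exp_apply_nonneg_of_offDiag_nonneg hA_offDiag)
    (exp_mulVec_of_mulVec_eq_smul hA_row) x

/-- Discrete maximum principle / sup-norm contraction (estimate (90) of the paper):
if `M` has nonnegative off-diagonal entries and zero row sums, `c ≥ 0` and `t ≥ 0`,
then `exp (t • (M - c • 1))` is a sup-norm contraction with factor `e^{-ct}`.
The norm on `Fin n → ℝ` is the sup norm. -/
theorem stmt11 {n : ℕ} (M : Matrix (Fin n) (Fin n) ℝ)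
    (hoff : ∀ i j, i ≠ j → 0 ≤ M i j) (hrow : ∀ i, ∑ j, M i j = 0)
    (c t : ℝ) (hc : 0 ≤ c) (ht : 0 ≤ t) (x : Fin n → ℝ) :
    ‖(NormedSpace.exp
        (t • (M - c • (1 : Matrix (Fin n) (Fin n) ℝ)))).mulVec x‖
      ≤ Real.exp (-c * t) * ‖x‖ :=
  stmt11_general M hoff hrow c t ht x
end

section
/- Let V and W be finite-dimensional real inner product spaces, let Λ : V → V, P_V : V → V, Θ : W → W, P_W : W → W be self-adjoint positive semidefinite linear maps, and let τ > 0, g ≥ 0, κ₁ > 0, κ₂ > 0 be real numbers. Set L := Λ + (g·κ₁)·id and D := Θ + (g·κ₂)·id. Suppose Q, Q', H ∈ V and u, u', μ ∈ W and s ∈ ℝ satisfy the scheme equations P_V(Q' - Q) + τ·L(Q') = τ·g·(κ₁·Q - H) and P_W(u' - u) + τ·D(u') = τ·g·(κ₂·u - μ), and define s̃' := s + g·(⟨H, Q' - Q⟩ + ⟨μ, u' - u⟩). Then, with δQ := Q' - Q and δu := u' - u and R := (1/τ)·(⟨P_V δQ, δQ⟩ + (τ/2)·⟨L δQ, δQ⟩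 + ⟨P_W δu, δu⟩ + (τ/2)·⟨D δu, δu⟩), the modified energy satisfies (1/2)⟨Λ Q', Q'⟩ + (1/2)⟨Θ u', u'⟩ + s̃' ≤ (1/2)⟨Λ Q, Q⟩ + (1/2)⟨Θ u, u⟩ + s - R; in particular R ≥ 0 and the modified energy does not increase. -/
/-!
Test the scheme equation `P δ + τ L Q' = τ g (κ Q - H)` with the increment `δ = Q' - Q`.
Since `Λ` is self-adjoint, `⟪Λ Q', Q'⟫ - ⟪Λ Q, Q⟫ = 2 ⟪Λ Q', δ⟫ - ⟪Λ δ, δ⟫`, and the result is an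
exact energy balance per component: energy, SAV increment `g ⟪H, δ⟫` and dissipation add up to the
old energy minus `g κ ‖δ‖² / 2 ≥ 0`. Summing over the two components gives the estimate, and the
dissipation is nonnegative because `P`, `Λ` and `g κ id` are positive semidefinite.
-/

open scoped RealInnerProductSpace

section EnergyStep

variable {V : Type*} [NormedAddCommGroup V] [InnerProductSpace ℝ V]

theorem LinearMap.IsSymmetric.inner_map_self_sub_inner_map_self {Λ : V →ₗ[ℝ] V}
    (hΛ : Λ.IsSymmetric) (x y : V) :
    ⟪Λ y, y⟫ - ⟪Λ x, x⟫ = 2 * ⟪Λ y, y - x⟫ - ⟪Λ (y - x), y - x⟫ := by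
  have hxy : ⟪Λ x, y⟫ = ⟪Λ y, x⟫ := by rw [hΛ x y, real_inner_comm]
  simp only [map_sub, inner_sub_left, inner_sub_right]
  linarith

theorem inner_apply_self_of_eq_add_smul_id {Λ L : V →ₗ[ℝ] V} {c : ℝ}
    (hL : L = Λ + c • LinearMap.id) (x : V) : ⟪L x, x⟫ = ⟪Λ x, x⟫ + c * ⟪x, x⟫ := by
  simp only [hL, LinearMap.add_apply, LinearMap.smul_apply, LinearMap.id_apply, inner_add_left,
    real_inner_smul_left]

theorem inner_apply_self_nonneg_of_eq_add_smul_id {Λ L : V →ₗ[ℝ] V} {c : ℝ}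
    (hL : L = Λ + c • LinearMap.id) (hΛ : ∀ x, 0 ≤ ⟪Λ x, x⟫) (hc : 0 ≤ c) (x : V) :
    0 ≤ ⟪L x, x⟫ := by
  rw [inner_apply_self_of_eq_add_smul_id hL]
  have := hΛ x
  have := real_inner_self_nonneg (x := x)
  positivity

variable {Λ L : V →ₗ[ℝ] V} (P : V →ₗ[ℝ] V) {τ g κ : ℝ} {Q Q' H : V}

theorem energy_balance_of_scheme_eq (hΛ : Λ.IsSymmetric) (hL : L = Λ + (g * κ) • LinearMap.id)
    (heq : P (Q' - Q) + τ • L Q' = (τ * g) • (κ • Q - H)) :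
    τ * ((1 / 2) * ⟪Λ Q', Q'⟫ + g * ⟪H, Q' - Q⟫) + ⟪P (Q' - Q), Q' - Q⟫
        + (τ / 2) * ⟪L (Q' - Q), Q' - Q⟫ + (τ * g * κ / 2) * ⟪Q' - Q, Q' - Q⟫
      = τ * ((1 / 2) * ⟪Λ Q, Q⟫) := by
  have htested : ⟪P (Q' - Q) + τ • L Q', Q' - Q⟫ = ⟪(τ * g) • (κ • Q - H), Q' - Q⟫ := by
    rw [heq]
  have hpolar := hΛ.inner_map_self_sub_inner_map_self Q Q'
  have hincr : ⟪Q' - Q, Q' - Q⟫ = ⟪Q', Q' - Q⟫ - ⟪Q, Q' - Q⟫ := inner_sub_left _ _ _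
  rw [inner_apply_self_of_eq_add_smul_id hL]
  simp only [hL, LinearMap.add_apply, LinearMap.smul_apply, LinearMap.id_apply, inner_add_left,
    inner_sub_left, real_inner_smul_left] at htested
  linear_combination htested + (τ / 2) * hpolar + (τ * g * κ) * hincr

theorem energy_add_dissipation_le_of_scheme_eq (hΛ : Λ.IsSymmetric)
    (hL : L = Λ + (g * κ) • LinearMap.id) (hτ : 0 < τ) (hgκ : 0 ≤ g * κ)
    (heq : P (Q' - Q) + τ • L Q' = (τ * g) • (κ • Q - H)) :
    (1 / 2) * ⟪Λ Q', Q'⟫ + g * ⟪H, Q' - Q⟫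
        + (1 / τ) * (⟪P (Q' - Q), Q' - Q⟫ + (τ / 2) * ⟪L (Q' - Q), Q' - Q⟫)
      ≤ (1 / 2) * ⟪Λ Q, Q⟫ := by
  have hbalance := energy_balance_of_scheme_eq P hΛ hL heq
  have hshift : 0 ≤ (τ * g * κ / 2) * ⟪Q' - Q, Q' - Q⟫ := by
    rw [mul_assoc τ]
    have := real_inner_self_nonneg (x := Q' - Q)
    positivity
  rw [← mul_le_mul_iff_right₀ hτ]
  field_simp
  linarith

end EnergyStep

theorem stmt12_general {V W : Type*}
    [NormedAddCommGroup V] [InnerProductSpace ℝ V]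
    [NormedAddCommGroup W] [InnerProductSpace ℝ W]
    (Λ PV : V →ₗ[ℝ] V) (Θ PW : W →ₗ[ℝ] W)
    (hΛsa : ∀ x y : V, ⟪Λ x, y⟫ = ⟪x, Λ y⟫) (hΛpos : ∀ x : V, 0 ≤ ⟪Λ x, x⟫)
    (hPVpos : ∀ x : V, 0 ≤ ⟪PV x, x⟫)
    (hΘsa : ∀ x y : W, ⟪Θ x, y⟫ = ⟪x, Θ y⟫) (hΘpos : ∀ x : W, 0 ≤ ⟪Θ x, x⟫)
    (hPWpos : ∀ x : W, 0 ≤ ⟪PW x, x⟫)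
    (τ g κ₁ κ₂ : ℝ) (hτ : 0 < τ) (hg : 0 ≤ g) (hκ₁ : 0 < κ₁) (hκ₂ : 0 < κ₂)
    (L : V →ₗ[ℝ] V) (hL : L = Λ + (g * κ₁) • LinearMap.id)
    (D : W →ₗ[ℝ] W) (hD : D = Θ + (g * κ₂) • LinearMap.id)
    (Q Q' H : V) (u u' μ : W) (s : ℝ)
    (hQeq : PV (Q' - Q) + τ • L Q' = (τ * g) • (κ₁ • Q - H))
    (hueq : PW (u' - u) + τ • D u' = (τ * g) • (κ₂ • u - μ))
    (s' : ℝ) (hs' : s' = s + g * (⟪H, Q' - Q⟫ + ⟪μ, u' - u⟫))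
    (R : ℝ)
    (hR : R = (1 / τ) * (⟪PV (Q' - Q), Q' - Q⟫ + (τ / 2) * ⟪L (Q' - Q), Q' - Q⟫
        + ⟪PW (u' - u), u' - u⟫ + (τ / 2) * ⟪D (u' - u), u' - u⟫)) :
    (1 / 2) * ⟪Λ Q', Q'⟫ + (1 / 2) * ⟪Θ u', u'⟫ + s'
        ≤ (1 / 2) * ⟪Λ Q, Q⟫ + (1 / 2) * ⟪Θ u, u⟫ + s - R
      ∧ 0 ≤ R := by
  subst hs' hR
  have hgκ₁ : 0 ≤ g * κ₁ := mul_nonneg hg hκ₁.le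
  have hgκ₂ : 0 ≤ g * κ₂ := mul_nonneg hg hκ₂.le
  have hV := energy_add_dissipation_le_of_scheme_eq PV hΛsa hL hτ hgκ₁ hQeq
  have hW := energy_add_dissipation_le_of_scheme_eq PW hΘsa hD hτ hgκ₂ hueq
  refine ⟨by linarith, ?_⟩
  have := hPVpos (Q' - Q)
  have := hPWpos (u' - u)
  have := inner_apply_self_nonneg_of_eq_add_smul_id hL hΛpos hgκ₁ (Q' - Q)
  have := inner_apply_self_nonneg_of_eq_add_smul_id hD hΘpos hgκ₂ (u' - u)
  positivity

/-- Core one-step energy-dissipation estimate (inequality (39) in Theorem 3 of the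
paper) for the provisional R-GSAV-EI update: with `L = Λ + (g κ₁) id`,
`D = Θ + (g κ₂) id`, the scheme equations and the provisional SAV update `s̃'`, the
modified energy decreases by at least the dissipation rate `R`, and `R ≥ 0`. -/
theorem stmt12 {V W : Type*}
    [NormedAddCommGroup V] [InnerProductSpace ℝ V] [FiniteDimensional ℝ V]
    [NormedAddCommGroup W] [InnerProductSpace ℝ W] [FiniteDimensional ℝ W]
    (Λ PV : V →ₗ[ℝ] V) (Θ PW : W →ₗ[ℝ] W)
    (hΛsa : ∀ x y : V, ⟪Λ x, y⟫ = ⟪x, Λ y⟫) (hΛpos : ∀ x : V, 0 ≤ ⟪Λ x, x⟫)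
    (hPVsa : ∀ x y : V, ⟪PV x, y⟫ = ⟪x, PV y⟫) (hPVpos : ∀ x : V, 0 ≤ ⟪PV x, x⟫)
    (hΘsa : ∀ x y : W, ⟪Θ x, y⟫ = ⟪x, Θ y⟫) (hΘpos : ∀ x : W, 0 ≤ ⟪Θ x, x⟫)
    (hPWsa : ∀ x y : W, ⟪PW x, y⟫ = ⟪x, PW y⟫) (hPWpos : ∀ x : W, 0 ≤ ⟪PW x, x⟫)
    (τ g κ₁ κ₂ : ℝ) (hτ : 0 < τ) (hg : 0 ≤ g) (hκ₁ : 0 < κ₁) (hκ₂ : 0 < κ₂)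
    (L : V →ₗ[ℝ] V) (hL : L = Λ + (g * κ₁) • LinearMap.id)
    (D : W →ₗ[ℝ] W) (hD : D = Θ + (g * κ₂) • LinearMap.id)
    (Q Q' H : V) (u u' μ : W) (s : ℝ)
    (hQeq : PV (Q' - Q) + τ • L Q' = (τ * g) • (κ₁ • Q - H))
    (hueq : PW (u' - u) + τ • D u' = (τ * g) • (κ₂ • u - μ))
    (s' : ℝ) (hs' : s' = s + g * (⟪H, Q' - Q⟫ + ⟪μ, u' - u⟫))
    (R : ℝ)
    (hR : R = (1 / τ) * (⟪PV (Q' - Q), Q' - Q⟫ + (τ / 2) * ⟪L (Q' - Q), Q' - Q⟫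
        + ⟪PW (u' - u), u' - u⟫ + (τ / 2) * ⟪D (u' - u), u' - u⟫)) :
    (1 / 2) * ⟪Λ Q', Q'⟫ + (1 / 2) * ⟪Θ u', u'⟫ + s'
        ≤ (1 / 2) * ⟪Λ Q, Q⟫ + (1 / 2) * ⟪Θ u, u⟫ + s - R
      ∧ 0 ≤ R :=
  stmt12_general Λ PV Θ PW hΛsa hΛpos hPVpos hΘsa hΘpos hPWpos τ g κ₁ κ₂ hτ hg hκ₁ hκ₂ L hL D hD Q
    Q' H u u' μ s hQeq hueq s' hs' R hR
end

section
/- Under the hypotheses of the preceding one-step dissipation estimate — V, W finite-dimensional real inner product spaces; Λ, P_V self-adjoint positive semidefinite on V; Θ, P_W self-adjoint positive semidefinite on W; τ > 0, g ≥ 0, κ₁, κ₂ > 0; L := Λ + (g·κ₁)·id, D := Θ + (g·κ₂)·id; Q, Q', H, u, u', μ, s satisfying P_V(Q' - Q) + τ·L(Q') = τ·g·(κ₁·Q - H), P_W(u' - u) + τ·D(u') = τ·g·(κ₂·u - μ), s̃' := s + g·(⟨H, Q' - Q⟩ + ⟨μ, u' - u⟩), and R := (1/τ)·(⟨P_V δQ,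 δQ⟩ + (τ/2)·⟨L δQ, δQ⟩ + ⟨P_W δu, δu⟩ + (τ/2)·⟨D δu, δu⟩) with δQ = Q' - Q, δu = u' - u — suppose additionally that η₀ ∈ [0, 1] and s' ∈ ℝ satisfies the relaxation constraint s' - s̃' ≤ (1 - η₀)·R. Then the relaxed modified energy satisfies (1/2)⟨Λ Q', Q'⟩ + (1/2)⟨Θ u', u'⟩ + s' ≤ (1/2)⟨Λ Q, Q⟩ + (1/2)⟨Θ u, u⟩ + s - η₀·R ≤ (1/2)⟨Λ Q, Q⟩ + (1/2)⟨Θ u, u⟩ + s. -/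
open scoped RealInnerProductSpace

private lemma key_aux {V : Type*} [NormedAddCommGroup V] [InnerProductSpace ℝ V]
    (A : V →ₗ[ℝ] V) (hA : ∀ x y : V, ⟪A x, y⟫ = ⟪x, A y⟫) (x y : V) :
    ⟪A y, y - x⟫ = (1/2) * ⟪A y, y⟫ - (1/2) * ⟪A x, x⟫ + (1/2) * ⟪A (y - x), y - x⟫ := by
  have h1 : ⟪A x, y⟫ = ⟪A y, x⟫ := by rw [hA, real_inner_comm]
  simp only [map_sub, inner_sub_left, inner_sub_right]
  linarith

/-- Unconditional energy stability of the relaxed R-GSAV-EI scheme (Theorem 3 of the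
paper): under the one-step scheme equations and the relaxation constraint
`s' - s̃' ≤ (1 - η₀) R` with `η₀ ∈ [0, 1]`, the relaxed modified energy dissipates at
rate at least `η₀ R ≥ 0`. -/
theorem stmt13 {V W : Type*}
    [NormedAddCommGroup V] [InnerProductSpace ℝ V] [FiniteDimensional ℝ V]
    [NormedAddCommGroup W] [InnerProductSpace ℝ W] [FiniteDimensional ℝ W]
    (Λ PV : V →ₗ[ℝ] V) (Θ PW : W →ₗ[ℝ] W)
    (hΛsa : ∀ x y : V, ⟪Λ x, y⟫ = ⟪x, Λ y⟫) (hΛpos : ∀ x : V, 0 ≤ ⟪Λ x, x⟫)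
    (hPVsa : ∀ x y : V, ⟪PV x, y⟫ = ⟪x, PV y⟫) (hPVpos : ∀ x : V, 0 ≤ ⟪PV x, x⟫)
    (hΘsa : ∀ x y : W, ⟪Θ x, y⟫ = ⟪x, Θ y⟫) (hΘpos : ∀ x : W, 0 ≤ ⟪Θ x, x⟫)
    (hPWsa : ∀ x y : W, ⟪PW x, y⟫ = ⟪x, PW y⟫) (hPWpos : ∀ x : W, 0 ≤ ⟪PW x, x⟫)
    (τ g κ₁ κ₂ : ℝ) (hτ : 0 < τ) (hg : 0 ≤ g) (hκ₁ : 0 < κ₁) (hκ₂ : 0 < κ₂)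
    (L : V →ₗ[ℝ] V) (hL : L = Λ + (g * κ₁) • LinearMap.id)
    (D : W →ₗ[ℝ] W) (hD : D = Θ + (g * κ₂) • LinearMap.id)
    (Q Q' H : V) (u u' μ : W) (s : ℝ)
    (hQeq : PV (Q' - Q) + τ • L Q' = (τ * g) • (κ₁ • Q - H))
    (hueq : PW (u' - u) + τ • D u' = (τ * g) • (κ₂ • u - μ))
    (stil : ℝ) (hstil : stil = s + g * (⟪H, Q' - Q⟫ + ⟪μ, u' - u⟫))
    (R : ℝ)
    (hR : R = (1 / τ) * (⟪PV (Q' - Q), Q' - Q⟫ + (τ / 2) * ⟪L (Q' - Q), Q' - Q⟫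
        + ⟪PW (u' - u), u' - u⟫ + (τ / 2) * ⟪D (u' - u), u' - u⟫))
    (η₀ : ℝ) (hη₀ : η₀ ∈ Set.Icc (0 : ℝ) 1)
    (s' : ℝ) (hs' : s' - stil ≤ (1 - η₀) * R) :
    (1 / 2) * ⟪Λ Q', Q'⟫ + (1 / 2) * ⟪Θ u', u'⟫ + s'
        ≤ (1 / 2) * ⟪Λ Q, Q⟫ + (1 / 2) * ⟪Θ u, u⟫ + s - η₀ * R
      ∧ (1 / 2) * ⟪Λ Q, Q⟫ + (1 / 2) * ⟪Θ u, u⟫ + s - η₀ * R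
        ≤ (1 / 2) * ⟪Λ Q, Q⟫ + (1 / 2) * ⟪Θ u, u⟫ + s := by
  obtain ⟨hη₀0, hη₀1⟩ := hη₀
  set δQ := Q' - Q with hδQ
  set δu := u' - u with hδu
  -- expand L and D on δ's
  have hLδ : ⟪L δQ, δQ⟫ = ⟪Λ δQ, δQ⟫ + (g * κ₁) * ⟪δQ, δQ⟫ := by
    simp [hL, inner_add_left, real_inner_smul_left]
  have hDδ : ⟪D δu, δu⟫ = ⟪Θ δu, δu⟫ + (g * κ₂) * ⟪δu, δu⟫ := by
    simp [hD, inner_add_left, real_inner_smul_left]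
  -- inner product of scheme equation with δQ
  have e1 : ⟪PV δQ, δQ⟫ + τ * ⟪L Q', δQ⟫ = τ * g * (κ₁ * ⟪Q, δQ⟫ - ⟪H, δQ⟫) := by
    have := congrArg (fun x => ⟪x, δQ⟫) hQeq
    simpa [inner_add_left, inner_sub_left, real_inner_smul_left, mul_sub, mul_assoc] using this
  have e2 : ⟪PW δu, δu⟫ + τ * ⟪D u', δu⟫ = τ * g * (κ₂ * ⟪u, δu⟫ - ⟪μ, δu⟫) := by
    have := congrArg (fun x => ⟪x, δu⟫) hueq
    simpa [inner_add_left, inner_sub_left, real_inner_smul_left, mul_sub, mul_assoc] using this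
  -- expand L Q' and D u'
  have hLQ' : ⟪L Q', δQ⟫ = ⟪Λ Q', δQ⟫ + (g * κ₁) * ⟪Q', δQ⟫ := by
    simp [hL, inner_add_left, real_inner_smul_left]
  have hDu' : ⟪D u', δu⟫ = ⟪Θ u', δu⟫ + (g * κ₂) * ⟪u', δu⟫ := by
    simp [hD, inner_add_left, real_inner_smul_left]
  -- polarization identities
  have kΛ : ⟪Λ Q', δQ⟫ = (1/2) * ⟪Λ Q', Q'⟫ - (1/2) * ⟪Λ Q, Q⟫ + (1/2) * ⟪Λ δQ, δQ⟫ :=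
    key_aux Λ hΛsa Q Q'
  have kΘ : ⟪Θ u', δu⟫ = (1/2) * ⟪Θ u', u'⟫ - (1/2) * ⟪Θ u, u⟫ + (1/2) * ⟪Θ δu, δu⟫ :=
    key_aux Θ hΘsa u u'
  -- relations ⟪Q,δQ⟫ = ⟪Q',δQ⟫ - ⟪δQ,δQ⟫
  have rQ : ⟪Q, δQ⟫ = ⟪Q', δQ⟫ - ⟪δQ, δQ⟫ := by
    have : Q = Q' - δQ := by rw [hδQ]; abel
    rw [this, inner_sub_left]
  have ru : ⟪u, δu⟫ = ⟪u', δu⟫ - ⟪δu, δu⟫ := by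
    have : u = u' - δu := by rw [hδu]; abel
    rw [this, inner_sub_left]
  -- positivity facts
  have hnQ : (0:ℝ) ≤ ⟪δQ, δQ⟫ := real_inner_self_nonneg
  have hnu : (0:ℝ) ≤ ⟪δu, δu⟫ := real_inner_self_nonneg
  have hpV := hPVpos δQ
  have hpW := hPWpos δu
  have haΛ := hΛpos δQ
  have haΘ := hΘpos δu
  have hgk1 : 0 ≤ g * κ₁ := mul_nonneg hg hκ₁.le
  have hgk2 : 0 ≤ g * κ₂ := mul_nonneg hg hκ₂.le
  have hRnn : 0 ≤ R := by
    rw [hR]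
    apply mul_nonneg (by positivity)
    have h1 : 0 ≤ ⟪L δQ, δQ⟫ := by rw [hLδ]; positivity
    have h2 : 0 ≤ ⟪D δu, δu⟫ := by rw [hDδ]; positivity
    have := hτ.le
    positivity
  have hτ' : τ ≠ 0 := hτ.ne'
  -- key energy balance
  have keyV' : ⟪PV δQ, δQ⟫ = τ * (-(g*κ₁) * ⟪δQ, δQ⟫ - g * ⟪H, δQ⟫
      - (1/2) * ⟪Λ Q', Q'⟫ + (1/2) * ⟪Λ Q, Q⟫ - (1/2) * ⟪Λ δQ, δQ⟫) := by
    rw [hLQ', kΛ, rQ] at e1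
    linear_combination e1
  have keyW' : ⟪PW δu, δu⟫ = τ * (-(g*κ₂) * ⟪δu, δu⟫ - g * ⟪μ, δu⟫
      - (1/2) * ⟪Θ u', u'⟫ + (1/2) * ⟪Θ u, u⟫ - (1/2) * ⟪Θ δu, δu⟫) := by
    rw [hDu', kΘ, ru] at e2
    linear_combination e2
  have hRval : R = (1/τ) * ⟪PV δQ, δQ⟫ + (1/2) * (⟪Λ δQ, δQ⟫ + (g*κ₁) * ⟪δQ, δQ⟫)
      + (1/τ) * ⟪PW δu, δu⟫ + (1/2) * (⟪Θ δu, δu⟫ + (g*κ₂) * ⟪δu, δu⟫) := by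
    rw [hR, hLδ, hDδ]; field_simp
  have pV1 : (1/τ) * ⟪PV δQ, δQ⟫ = -(g*κ₁) * ⟪δQ, δQ⟫ - g * ⟪H, δQ⟫
      - (1/2) * ⟪Λ Q', Q'⟫ + (1/2) * ⟪Λ Q, Q⟫ - (1/2) * ⟪Λ δQ, δQ⟫ := by
    rw [keyV', one_div, inv_mul_cancel_left₀ hτ']
  have pW1 : (1/τ) * ⟪PW δu, δu⟫ = -(g*κ₂) * ⟪δu, δu⟫ - g * ⟪μ, δu⟫
      - (1/2) * ⟪Θ u', u'⟫ + (1/2) * ⟪Θ u, u⟫ - (1/2) * ⟪Θ δu, δu⟫ := by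
    rw [keyW', one_div, inv_mul_cancel_left₀ hτ']
  have Eval : (1/2) * ⟪Λ Q', Q'⟫ + (1/2) * ⟪Θ u', u'⟫ + stil
      = (1/2) * ⟪Λ Q, Q⟫ + (1/2) * ⟪Θ u, u⟫ + s - R
        - (g*κ₁/2) * ⟪δQ, δQ⟫ - (g*κ₂/2) * ⟪δu, δu⟫ := by
    rw [hstil, hRval, pV1, pW1]
    ring
  have hη₀R : 0 ≤ η₀ * R := mul_nonneg hη₀0 hRnn
  constructor
  · have extra1 : 0 ≤ (g * κ₁ / 2) * ⟪δQ, δQ⟫ := by positivity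
    have extra2 : 0 ≤ (g * κ₂ / 2) * ⟪δu, δu⟫ := by positivity
    have hs'' : s' - stil ≤ R - η₀ * R := by
      have : (1 - η₀) * R = R - η₀ * R := by ring
      linarith [hs']
    linarith [Eval, hs'', extra1, extra2]
  · linarith [hη₀R]
end

section
/- Let L be a real n×n matrix, c > 0, τ > 0, and η ≥ 0. Suppose the semigroup generated by -L is a contraction with rate c in the sup-norm, i.e., for every t ≥ 0 and every vector v ∈ ℝⁿ, max_i |(exp(-t·L)·v)_i| ≤ e^{-ct}·max_i |v_i|. Let Q, N ∈ ℝⁿ satisfy max_i |Q_i| ≤ η and max_i |N_i| ≤ c·η. Then the ETD1 update Q' := exp(-τ·L)·Q + ∫₀^τ exp(-(τ-s)·L)·N ds satisfies max_i |Q'_i| ≤ η. -/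
/-! Both pieces of the update are controlled by the contraction estimate: the free part has norm
at most `e^{-cτ} η`, and the Duhamel integral at most `∫₀^τ c e^{-c(τ-s)} η ds = (1 - e^{-cτ}) η`.
The two weights `e^{-cτ}` and `1 - e^{-cτ}` add up to `1`. -/

theorem integral_mul_exp_neg_mul_sub (c τ : ℝ) :
    ∫ s in (0 : ℝ)..τ, c * Real.exp (-c * (τ - s)) = 1 - Real.exp (-c * τ) := by
  have hderiv : ∀ s ∈ Set.uIcc (0 : ℝ) τ,
      HasDerivAt (fun s => Real.exp (-c * (τ - s))) (c * Real.exp (-c * (τ - s))) s := by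
    intro s _
    have hlin : HasDerivAt (fun s : ℝ => -c * (τ - s)) c s := by
      simpa using ((hasDerivAt_id s).const_sub τ).const_mul (-c)
    simpa [mul_comm] using hlin.exp
  rw [intervalIntegral.integral_eq_sub_of_hasDerivAt hderiv ((by fun_prop : Continuous _).intervalIntegrable _ _)]
  simp

theorem norm_integral_le_of_norm_le_exp_decay {E : Type*} [NormedAddCommGroup E]
    [NormedSpace ℝ E] {F : ℝ → E} {c τ η : ℝ} (hτ : 0 ≤ τ)
    (hF : ∀ s ∈ Set.Ioc 0 τ, ‖F s‖ ≤ c * Real.exp (-c * (τ - s)) * η) :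
    ‖∫ s in (0 : ℝ)..τ, F s‖ ≤ (1 - Real.exp (-c * τ)) * η := by
  calc ‖∫ s in (0 : ℝ)..τ, F s‖
      ≤ ∫ s in (0 : ℝ)..τ, c * Real.exp (-c * (τ - s)) * η :=
        intervalIntegral.norm_integral_le_of_norm_le hτ (.of_forall hF)
          ((by fun_prop : Continuous _).intervalIntegrable _ _)
    _ = (1 - Real.exp (-c * τ)) * η := by
        rw [intervalIntegral.integral_mul_const, integral_mul_exp_neg_mul_sub]

theorem stmt14_general {n : ℕ} (L : Matrix (Fin n) (Fin n) ℝ) (c τ η : ℝ)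
    (hτ : 0 < τ)
    (hcontr : ∀ t : ℝ, 0 ≤ t → ∀ v : Fin n → ℝ,
      ‖(NormedSpace.exp (-(t • L))).mulVec v‖ ≤ Real.exp (-c * t) * ‖v‖)
    (Q N : Fin n → ℝ) (hQ : ‖Q‖ ≤ η) (hN : ‖N‖ ≤ c * η) :
    ‖(NormedSpace.exp (-(τ • L))).mulVec Q
        + ∫ s in (0 : ℝ)..τ, (NormedSpace.exp (-((τ - s) • L))).mulVec N‖
      ≤ η := by
  have hfree : ‖(NormedSpace.exp (-(τ • L))).mulVec Q‖ ≤ Real.exp (-c * τ) * η :=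
    (hcontr τ hτ.le Q).trans (by gcongr)
  have hduhamel :
      ‖∫ s in (0 : ℝ)..τ, (NormedSpace.exp (-((τ - s) • L))).mulVec N‖
        ≤ (1 - Real.exp (-c * τ)) * η := by
    refine norm_integral_le_of_norm_le_exp_decay hτ.le fun s hs => ?_
    calc ‖(NormedSpace.exp (-((τ - s) • L))).mulVec N‖
        ≤ Real.exp (-c * (τ - s)) * ‖N‖ := hcontr _ (sub_nonneg.2 hs.2) N
      _ ≤ Real.exp (-c * (τ - s)) * (c * η) := by gcongr
      _ = c * Real.exp (-c * (τ - s)) * η := by ring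
  calc _ ≤ _ := norm_add_le _ _
    _ ≤ Real.exp (-c * τ) * η + (1 - Real.exp (-c * τ)) * η := add_le_add hfree hduhamel
    _ = η := by ring

/-- Single-step maximum-bound-principle preservation (Theorem 11 of the paper): if the
semigroup generated by `-L` contracts the sup norm at rate `c`, `‖Q‖ ≤ η` and
`‖N‖ ≤ c η`, then the ETD1 update
`Q' = e^{-τL} Q + ∫₀^τ e^{-(τ-s)L} N ds` satisfies `‖Q'‖ ≤ η`.
The norm on `Fin n → ℝ` is the sup norm. -/
theorem stmt14 {n : ℕ} (L : Matrix (Fin n) (Fin n) ℝ) (c τ η : ℝ)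
    (hc : 0 < c) (hτ : 0 < τ) (hη : 0 ≤ η)
    (hcontr : ∀ t : ℝ, 0 ≤ t → ∀ v : Fin n → ℝ,
      ‖(NormedSpace.exp (-(t • L))).mulVec v‖ ≤ Real.exp (-c * t) * ‖v‖)
    (Q N : Fin n → ℝ) (hQ : ‖Q‖ ≤ η) (hN : ‖N‖ ≤ c * η) :
    ‖(NormedSpace.exp (-(τ • L))).mulVec Q
        + ∫ s in (0 : ℝ)..τ, (NormedSpace.exp (-((τ - s) • L))).mulVec N‖
      ≤ η :=
  stmt14_general L c τ η hτ hcontr Q N hQ hN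
end

section
/- Let A be a real m×m matrix, τ > 0, n a natural number, N : ℕ → ℝᵐ a sequence of vectors, and Q : ℕ → ℝᵐ a sequence of vectors satisfying the single-step variation-of-constants recursion Q(k+1) = exp(τ·A)·Q(k) + ∫₀^τ exp((τ-s)·A)·N(k) ds for all k < n. Then Q(n) admits the discrete Duhamel representation Q(n) = exp(n·τ·A)·Q(0) + ∫₀^{n·τ} exp((n·τ - σ)·A)·Ñ(σ) dσ, where Ñ : ℝ → ℝᵐ is the piecewise constant interpolant defined by Ñ(σ) = N(k) for σ ∈ [k·τ, (k+1)·τ). -/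
/-!
Induction on `n`. Applying `exp (τ • A)` to the representation of `Q n` shifts the kernel by `τ`
(semigroup property), while the substitution `σ = s + n τ` turns the local integral
`∫₀^τ exp ((τ - s) • A) *ᵥ N n ds` into the integral of the kernel against `Ntil` over the cell
`[n τ, (n + 1) τ]`, on which `Ntil = N n` off the right endpoint. The two integrals then fuse
into one over `[0, (n + 1) τ]`.
-/

open Matrix MeasureTheory NormedSpace Set

variable {ι : Type*} [Fintype ι] [DecidableEq ι]

theorem Matrix.continuous_exp_smul (A : Matrix ι ι ℝ) :
    Continuous fun t : ℝ => exp (t • A) := by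
  let _ := Matrix.linftyOpNormedRing (n := ι) (α := ℝ)
  let _ := Matrix.linftyOpNormedAlgebra (n := ι) (R := ℝ) (α := ℝ)
  have hexp : Continuous (exp : Matrix ι ι ℝ → Matrix ι ι ℝ) :=
    continuous_iff_continuousAt.2 fun M => (exp_analytic (𝕂 := ℝ) M).continuousAt
  exact hexp.comp (continuous_id.smul continuous_const)

theorem Matrix.exp_smul_mul_exp_smul (A : Matrix ι ι ℝ) (s t : ℝ) :
    exp (s • A) * exp (t • A) = exp ((s + t) • A) := by
  rw [add_smul, Matrix.exp_add_of_commute]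
  exact ((Commute.refl A).smul_left s).smul_right t

theorem Matrix.continuous_exp_smul_mulVec (A : Matrix ι ι ℝ) (c : ℝ) (v : ι → ℝ) :
    Continuous fun σ : ℝ => exp ((c - σ) • A) *ᵥ v :=
  ((continuous_exp_smul A).comp (continuous_const.sub continuous_id)).matrix_mulVec
    continuous_const

theorem Matrix.exp_smul_mulVec_intervalIntegral (A : Matrix ι ι ℝ) (t c a b : ℝ)
    {f : ℝ → ι → ℝ} (hf : IntervalIntegrable (fun σ => exp ((c - σ) • A) *ᵥ f σ) volume a b) :
    exp (t • A) *ᵥ ∫ σ in a..b, exp ((c - σ) • A) *ᵥ f σ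
      = ∫ σ in a..b, exp ((t + c - σ) • A) *ᵥ f σ := by
  let L := (exp (t • A)).mulVecLin.toContinuousLinearMap
  change L _ = _
  rw [← L.intervalIntegral_comp_comm hf]
  congr! 2 with σ
  simp [L, mulVec_mulVec, exp_smul_mul_exp_smul, add_sub_assoc]

theorem Matrix.integral_exp_smul_mulVec_comp_add_right (A : Matrix ι ι ℝ) (v : ι → ℝ) (a τ : ℝ) :
    ∫ s in (0 : ℝ)..τ, exp ((τ - s) • A) *ᵥ v
      = ∫ σ in a..a + τ, exp ((a + τ - σ) • A) *ᵥ v := by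
  have h := intervalIntegral.integral_comp_add_left
    (fun σ => exp ((a + τ - σ) • A) *ᵥ v) (a := 0) (b := τ) a
  simpa only [add_sub_add_left_eq_sub, add_zero] using h

namespace intervalIntegral

variable {E : Type*} [NormedAddCommGroup E] {f g : ℝ → E} {a b : ℝ}

theorem integral_congr_Ico [NormedSpace ℝ E] (hab : a ≤ b) (h : EqOn f g (Ico a b)) :
    ∫ x in a..b, f x = ∫ x in a..b, g x := by
  simp only [integral_of_le hab, ← integral_Ico_eq_integral_Ioc]
  exact setIntegral_congr_fun measurableSet_Ico h

theorem _root_.IntervalIntegrable.congr_Ico (hab : a ≤ b) (h : EqOn f g (Ico a b))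
    (hf : IntervalIntegrable f volume a b) : IntervalIntegrable g volume a b := by
  rw [intervalIntegrable_iff_integrableOn_Ico_of_le hab] at hf ⊢
  exact hf.congr_fun h measurableSet_Ico

end intervalIntegral

section Interpolant

variable (A : Matrix ι ι ℝ) {τ : ℝ} {N : ℕ → ι → ℝ} {Ntil : ℝ → ι → ℝ}

theorem eqOn_exp_smul_mulVec_interpolant
    (hNtil : ∀ (σ : ℝ) (k : ℕ), σ ∈ Ico ((k : ℝ) * τ) ((k + 1 : ℝ) * τ) → Ntil σ = N k)
    (c : ℝ) (k : ℕ) :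
    EqOn (fun σ => exp ((c - σ) • A) *ᵥ N k) (fun σ => exp ((c - σ) • A) *ᵥ Ntil σ)
      (Ico (k * τ) ((k + 1) * τ)) :=
  fun σ hσ => by simp only [hNtil σ k hσ]

variable (hτ : 0 ≤ τ)
  (hNtil : ∀ (σ : ℝ) (k : ℕ), σ ∈ Ico ((k : ℝ) * τ) ((k + 1 : ℝ) * τ) → Ntil σ = N k)
include hτ hNtil

theorem intervalIntegrable_exp_smul_mulVec_interpolant_cell (c : ℝ) (k : ℕ) :
    IntervalIntegrable (fun σ => exp ((c - σ) • A) *ᵥ Ntil σ) volume (k * τ) ((k + 1) * τ) :=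
  ((continuous_exp_smul_mulVec A c (N k)).intervalIntegrable _ _).congr_Ico (by nlinarith)
    (eqOn_exp_smul_mulVec_interpolant A hNtil c k)

theorem intervalIntegrable_exp_smul_mulVec_interpolant (c : ℝ) (n : ℕ) :
    IntervalIntegrable (fun σ => exp ((c - σ) • A) *ᵥ Ntil σ) volume 0 (n * τ) := by
  simpa using IntervalIntegrable.trans_iterate (a := fun k : ℕ => (k : ℝ) * τ) (n := n)
    fun k _ => by
      push_cast
      exact intervalIntegrable_exp_smul_mulVec_interpolant_cell A hτ hNtil c k

theorem integral_exp_smul_mulVec_eq_integral_interpolant_cell (k : ℕ) :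
    ∫ s in (0 : ℝ)..τ, exp ((τ - s) • A) *ᵥ N k
      = ∫ σ in k * τ..(k + 1) * τ, exp (((k + 1) * τ - σ) • A) *ᵥ Ntil σ := by
  rw [integral_exp_smul_mulVec_comp_add_right A (N k) (k * τ),
    show k * τ + τ = (k + 1) * τ by ring]
  exact intervalIntegral.integral_congr_Ico (by nlinarith)
    (eqOn_exp_smul_mulVec_interpolant A hNtil _ k)

end Interpolant

/-- The fully discrete Duhamel representation (equations (69)–(71) of the paper):
if `Q` satisfies the single-step variation-of-constants recursion
`Q (k+1) = e^{τA} Q k + ∫₀^τ e^{(τ-s)A} (N k) ds` for all `k < n`, then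
`Q n = e^{nτA} Q 0 + ∫₀^{nτ} e^{(nτ-σ)A} Ñ σ dσ`, where `Ñ` is the piecewise constant
interpolant with `Ñ σ = N k` for `σ ∈ [kτ, (k+1)τ)`. -/
theorem stmt15 {m : ℕ} (A : Matrix (Fin m) (Fin m) ℝ) (τ : ℝ) (hτ : 0 < τ)
    (n : ℕ) (N : ℕ → Fin m → ℝ) (Q : ℕ → Fin m → ℝ)
    (hrec : ∀ k < n, Q (k + 1) = (NormedSpace.exp (τ • A)).mulVec (Q k)
      + ∫ s in (0 : ℝ)..τ, (NormedSpace.exp ((τ - s) • A)).mulVec (N k))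
    (Ntil : ℝ → Fin m → ℝ)
    (hNtil : ∀ (σ : ℝ) (k : ℕ), σ ∈ Set.Ico ((k : ℝ) * τ) ((k + 1 : ℝ) * τ) →
      Ntil σ = N k) :
    Q n = (NormedSpace.exp (((n : ℝ) * τ) • A)).mulVec (Q 0)
      + ∫ σ in (0 : ℝ)..((n : ℝ) * τ),
          (NormedSpace.exp (((n : ℝ) * τ - σ) • A)).mulVec (Ntil σ) := by
  induction n with
  | zero => simp
  | succ n ih =>
    push_cast
    calc Q (n + 1) = exp (τ • A) *ᵥ Q n + ∫ s in (0 : ℝ)..τ, exp ((τ - s) • A) *ᵥ N n :=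
          hrec n n.lt_succ_self
      _ = exp (((n + 1) * τ) • A) *ᵥ Q 0
            + ((∫ σ in (0 : ℝ)..n * τ, exp (((n + 1) * τ - σ) • A) *ᵥ Ntil σ)
              + ∫ σ in n * τ..(n + 1) * τ, exp (((n + 1) * τ - σ) • A) *ᵥ Ntil σ) := by
        rw [ih fun k hk => hrec k (by omega), mulVec_add, mulVec_mulVec, exp_smul_mul_exp_smul,
          exp_smul_mulVec_intervalIntegral A _ _ _ _
            (intervalIntegrable_exp_smul_mulVec_interpolant A hτ.le hNtil _ n),
          integral_exp_smul_mulVec_eq_integral_interpolant_cell A hτ.le hNtil, add_assoc,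
          show τ + n * τ = (n + 1) * τ by ring]
      _ = _ := by
        rw [intervalIntegral.integral_add_adjacent_intervals
          (intervalIntegrable_exp_smul_mulVec_interpolant A hτ.le hNtil _ n)
          (intervalIntegrable_exp_smul_mulVec_interpolant_cell A hτ.le hNtil _ n)]
end
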